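/- Let ι be an index set, (X_i)_{i∈ι} a family of complex Banach spaces, and let 𝔛 denote their ℓ¹-direct sum (the space lp X 1), with ι_j : X_j → 𝔛 the canonical isometric inclusion of the j-th summand. Fix an integer n ≥ 1, a constant C > 0, and a complex Banach space E. Suppose that for each n-tuple k = (k₁,…,kₙ) ∈ ιⁿ we are given a function g_k : X_{k₁} × ⋯ × X_{kₙ} → E. Then the following are equivalent: (a) there exists a continuous n-multilinear map T : 𝔛 × ⋯ × 𝔛 → E with ‖T‖ ≤ C such that T(ι_{k₁}(x₁),…,ι_{kₙ}(xₙ)) = g_k(x₁,…,xₙ) for every k ∈ ιⁿ and all x_j ∈ X_{k_j}; (b) for every k ∈ ιⁿ, the function g_k is (the underlying function of) a continuous n-multilinear map X_{k₁} × ⋯ × X_{kₙ} → E of norm at most C. -/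

import Mathlib

open scoped ENNReal

instance : Fact ((1 : ℝ≥0∞) ≤ 1) := ⟨le_rfl⟩

/-!
Restricting `T` to the summands gives the maps `M_k`, of norm at most `‖T‖` because each `ι_j` is
an isometry. Conversely, the extension is forced to be
`T(u₁, …, uₙ) = ∑_k M_k(u₁(k₁), …, uₙ(kₙ))`; this series converges absolutely since its terms are
bounded by `C ∏_j ‖u_j(k_j)‖`, and `∑_k ∏_j ‖u_j(k_j)‖ ≤ ∏_j ∑_i ‖u_j(i)‖ = ∏_j ‖u_j‖` is exactly
where the `ℓ¹` norm enters.
-/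

namespace lp

variable {α 𝕜 : Type*} {E : α → Type*} [DecidableEq α] [NormedRing 𝕜]
  [∀ i, NormedAddCommGroup (E i)] [∀ i, Module 𝕜 (E i)] [∀ i, IsBoundedSMul 𝕜 (E i)]
  {p : ℝ≥0∞} [Fact (1 ≤ p)]

variable (𝕜 E p) in
def singleLinearIsometry (i : α) : E i →ₗᵢ[𝕜] lp E p where
  __ := lsingle p i
  norm_map' := lp.norm_single (zero_lt_one.trans_le Fact.out) i

end lp

theorem lp.hasSum_norm_of_one {α : Type*} {E : α → Type*} [∀ i, NormedAddCommGroup (E i)]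
    (f : lp E 1) : HasSum (fun i => ‖f i‖) ‖f‖ := by
  simpa using lp.hasSum_norm (p := 1) (by norm_num) f

section ProdApply

variable {κ ι : Type*} [Fintype κ] {f : κ → ι → ℝ} {a : κ → ℝ}

theorem sum_prod_apply_le_prod_of_hasSum (hf₀ : ∀ j i, 0 ≤ f j i) (hf : ∀ j, HasSum (f j) (a j))
    (s : Finset (κ → ι)) : ∑ k ∈ s, ∏ j, f j (k j) ≤ ∏ j, a j := by
  classical
  have hs : s ⊆ Fintype.piFinset fun j => s.image (· j) := fun k hk =>
    Fintype.mem_piFinset.2 fun j => Finset.mem_image_of_mem (· j) hk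
  calc ∑ k ∈ s, ∏ j, f j (k j)
      ≤ ∑ k ∈ Fintype.piFinset fun j => s.image (· j), ∏ j, f j (k j) :=
        Finset.sum_le_sum_of_subset_of_nonneg hs fun k _ _ =>
          Finset.prod_nonneg fun j _ => hf₀ j (k j)
    _ = ∏ j, ∑ i ∈ s.image (· j), f j i := (Finset.prod_univ_sum _ _).symm
    _ ≤ ∏ j, a j := Finset.prod_le_prod
        (fun j _ => Finset.sum_nonneg fun i _ => hf₀ j i)
        (fun j _ => sum_le_hasSum _ (fun i _ => hf₀ j i) (hf j))

theorem summable_prod_apply_of_hasSum (hf₀ : ∀ j i, 0 ≤ f j i) (hf : ∀ j, HasSum (f j) (a j)) :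
    Summable fun k : κ → ι => ∏ j, f j (k j) :=
  summable_of_sum_le (fun k => Finset.prod_nonneg fun j _ => hf₀ j (k j))
    (sum_prod_apply_le_prod_of_hasSum hf₀ hf)

theorem tsum_prod_apply_le_prod_of_hasSum (hf₀ : ∀ j i, 0 ≤ f j i)
    (hf : ∀ j, HasSum (f j) (a j)) : ∑' k : κ → ι, ∏ j, f j (k j) ≤ ∏ j, a j :=
  (summable_prod_apply_of_hasSum hf₀ hf).tsum_le_of_sum_le
    (sum_prod_apply_le_prod_of_hasSum hf₀ hf)

end ProdApply

namespace MultilinearMap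

variable {R κ ι : Type*} [Semiring R] {M : ι → Type*} [∀ i, AddCommMonoid (M i)]
  [∀ i, Module R (M i)] {F : Type*} [AddCommMonoid F] [Module R F] [TopologicalSpace F]
  [T2Space F] [ContinuousAdd F] [ContinuousConstSMul R F]

noncomputable def tsum (f : κ → MultilinearMap R M F) (hf : ∀ m, Summable fun k => f k m) :
    MultilinearMap R M F where
  toFun m := ∑' k, f k m
  map_update_add' m i x y := by
    simp only [MultilinearMap.map_update_add]
    exact (hf _).tsum_add (hf _)
  map_update_smul' m i c x := by
    simp only [MultilinearMap.map_update_smul]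
    exact (hf _).tsum_const_smul c

end MultilinearMap

section L1Extension

variable {𝕜 κ ι : Type*} [NontriviallyNormedField 𝕜] [Fintype κ] {X : ι → Type*}
  [∀ i, NormedAddCommGroup (X i)] [∀ i, NormedSpace 𝕜 (X i)]
  {E : Type*} [NormedAddCommGroup E] [NormedSpace 𝕜 E]
  {M : ∀ k : κ → ι, ContinuousMultilinearMap 𝕜 (fun j => X (k j)) E} {C : ℝ}

theorem norm_apply_coord_le (hM : ∀ k, ‖M k‖ ≤ C) (u : κ → lp X 1) (k : κ → ι) :
    ‖M k fun j => u j (k j)‖ ≤ C * ∏ j, ‖u j (k j)‖ :=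
  ((M k).le_opNorm _).trans (mul_le_mul_of_nonneg_right (hM k) (by positivity))

theorem summable_prod_norm_apply_coord (u : κ → lp X 1) :
    Summable fun k : κ → ι => ∏ j, ‖u j (k j)‖ :=
  summable_prod_apply_of_hasSum (f := fun j i => ‖u j i‖) (fun _ _ => norm_nonneg _) fun j =>
    lp.hasSum_norm_of_one (u j)

theorem summable_norm_apply_coord (hM : ∀ k, ‖M k‖ ≤ C) (u : κ → lp X 1) :
    Summable fun k => ‖M k fun j => u j (k j)‖ :=
  .of_nonneg_of_le (fun _ => norm_nonneg _) (norm_apply_coord_le hM u)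
    ((summable_prod_norm_apply_coord u).mul_left C)

theorem norm_tsum_apply_coord_le (hM : ∀ k, ‖M k‖ ≤ C) (hC : 0 ≤ C) (u : κ → lp X 1) :
    ‖∑' k, M k fun j => u j (k j)‖ ≤ C * ∏ j, ‖u j‖ :=
  calc ‖∑' k, M k fun j => u j (k j)‖
      ≤ ∑' k, ‖M k fun j => u j (k j)‖ := norm_tsum_le_tsum_norm (summable_norm_apply_coord hM u)
    _ ≤ ∑' k : κ → ι, C * ∏ j, ‖u j (k j)‖ := (summable_norm_apply_coord hM u).tsum_le_tsum
        (norm_apply_coord_le hM u) ((summable_prod_norm_apply_coord u).mul_left C)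
    _ = C * ∑' k : κ → ι, ∏ j, ‖u j (k j)‖ := tsum_mul_left
    _ ≤ C * ∏ j, ‖u j‖ := mul_le_mul_of_nonneg_left
        (tsum_prod_apply_le_prod_of_hasSum (f := fun j i => ‖u j i‖) (fun _ _ => norm_nonneg _)
          fun j => lp.hasSum_norm_of_one (u j)) hC

variable [CompleteSpace E]

variable (M) in
noncomputable def l1Extension (hM : ∀ k, ‖M k‖ ≤ C) (hC : 0 ≤ C) :
    ContinuousMultilinearMap 𝕜 (fun _ : κ => lp X 1) E :=
  (MultilinearMap.tsum
      (fun k => ((M k).compContinuousLinearMap fun j => lp.evalCLM 𝕜 X 1 (k j)).toMultilinearMap)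
      fun u => (summable_norm_apply_coord hM u).of_norm).mkContinuous
    C (norm_tsum_apply_coord_le hM hC)

theorem l1Extension_apply (hM : ∀ k, ‖M k‖ ≤ C) (hC : 0 ≤ C) (u : κ → lp X 1) :
    l1Extension M hM hC u = ∑' k, M k fun j => u j (k j) :=
  rfl

theorem norm_l1Extension_le (hM : ∀ k, ‖M k‖ ≤ C) (hC : 0 ≤ C) : ‖l1Extension M hM hC‖ ≤ C :=
  MultilinearMap.mkContinuous_norm_le _ hC _

theorem l1Extension_single [DecidableEq ι] (hM : ∀ k, ‖M k‖ ≤ C) (hC : 0 ≤ C) (k : κ → ι)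
    (x : ∀ j, X (k j)) : l1Extension M hM hC (fun j => lp.single 1 (k j) (x j)) = M k x := by
  rw [l1Extension_apply, tsum_eq_single k]
  · simp only [lp.single_apply_self]
  · intro k' hk'
    obtain ⟨j, hj⟩ := Function.ne_iff.1 hk'
    exact (M k').map_coord_zero j (lp.single_apply_ne 1 (k j) (x j) hj)

end L1Extension

theorem multilinear_extension_iff_general
    {ι : Type*} [DecidableEq ι] (X : ι → Type*)
    [∀ i, NormedAddCommGroup (X i)] [∀ i, NormedSpace ℂ (X i)]
    (n : ℕ) (C : ℝ) (hC : 0 < C)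
    (E : Type*) [NormedAddCommGroup E] [NormedSpace ℂ E] [CompleteSpace E]
    (g : ∀ k : Fin n → ι, (∀ j, X (k j)) → E) :
    (∃ T : ContinuousMultilinearMap ℂ (fun _ : Fin n => lp X 1) E,
        ‖T‖ ≤ C ∧
        ∀ (k : Fin n → ι) (x : ∀ j, X (k j)),
          T (fun j => lp.single 1 (k j) (x j)) = g k x)
    ↔
    (∀ k : Fin n → ι, ∃ M : ContinuousMultilinearMap ℂ (fun j => X (k j)) E,
        ‖M‖ ≤ C ∧ ∀ x : ∀ j, X (k j), M x = g k x) := by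
  constructor
  · rintro ⟨T, hT, hTg⟩ k
    exact ⟨T.compContinuousLinearMap fun j =>
        (lp.singleLinearIsometry ℂ X 1 (k j)).toContinuousLinearMap,
      (T.norm_compContinuous_linearIsometry_le _).trans hT, hTg k⟩
  · intro h
    choose M hM hMg using h
    exact ⟨l1Extension M hM hC.le, norm_l1Extension_le hM hC.le,
      fun k x => (l1Extension_single hM hC.le k x).trans (hMg k x)⟩

/-- Lemma on multilinear extensions to ℓ¹-direct sums: a family of functions on the
components extends to a continuous multilinear map of norm ≤ C on the ℓ¹-sum iff each
member of the family is (the underlying function of) a continuous multilinear map of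
norm ≤ C. -/
theorem multilinear_extension_iff
    {ι : Type*} [DecidableEq ι] (X : ι → Type*)
    [∀ i, NormedAddCommGroup (X i)] [∀ i, NormedSpace ℂ (X i)] [∀ i, CompleteSpace (X i)]
    (n : ℕ) (hn : 1 ≤ n) (C : ℝ) (hC : 0 < C)
    (E : Type*) [NormedAddCommGroup E] [NormedSpace ℂ E] [CompleteSpace E]
    (g : ∀ k : Fin n → ι, (∀ j, X (k j)) → E) :
    (∃ T : ContinuousMultilinearMap ℂ (fun _ : Fin n => lp X 1) E,
        ‖T‖ ≤ C ∧
        ∀ (k : Fin n → ι) (x : ∀ j, X (k j)),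
          T (fun j => lp.single 1 (k j) (x j)) = g k x)
    ↔
    (∀ k : Fin n → ι, ∃ M : ContinuousMultilinearMap ℂ (fun j => X (k j)) E,
        ‖M‖ ≤ C ∧ ∀ x : ∀ j, X (k j), M x = g k x) :=
  multilinear_extension_iff_general X n C hC E g
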